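/- arXiv:0909.0987 — 6 statements merged into one kernel-verified Lean document; each statement's English description precedes it below -/
import Mathlib

section
/- (Krein) Let A belong to the class Sym. Then there exists μ ∈ H such that S_μ ∩ ℝ = ∅; that is, for every x ∈ ℝ there exists ψ ∈ ker(A* − xI) with ⟨μ, ψ⟩ ≠ 0. -/
/-!
Take for `μ` a generator of `ker(A* - i)`. For real `x`, regularity makes `ran(A - x)` closed, and
`ker(A* - x) = ran(A - x)ᗮ` cannot vanish, since otherwise `A - x` would be onto and `A` would
acquire the nonreal eigenvalue `i`. If some nonzero `ψ ∈ ker(A* - x)` were orthogonal to `μ`, it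
would lie in `ker(A* - i)ᗮ = ran(A + i)`, say `ψ = (A + i) φ`; pairing `ψ` with `(A - x) φ`,
which it is orthogonal to, and using that `⟪(A - x) φ, φ⟫` is real gives `(A - x) φ = 0`, hence
`φ = 0` by regularity, and `ψ = 0`.
-/

open Complex ComplexConjugate

noncomputable section

variable {H : Type*} [NormedAddCommGroup H] [InnerProductSpace ℂ H] [CompleteSpace H]

/-- The defect (deficiency) subspace `ker(A* - z·I)`, described via the graph of the
adjoint: `ψ ∈ ker(A* - z·I)` iff `ψ ∈ dom(A*)` and `A* ψ = z • ψ`. -/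
def defectSet (A : H →ₗ.[ℂ] H) (z : ℂ) : Set H :=
  {ψ : H | (ψ, z • ψ) ∈ A.adjoint.graph}

/-- The class `Sym`: simple, regular, closed, densely defined symmetric operators
with deficiency indices (1,1). -/
structure IsSymClass (A : H →ₗ.[ℂ] H) : Prop where
  dense : Dense (A.domain : Set H)
  symmetric : ∀ φ ψ : A.domain, (inner ℂ (A φ) (ψ : H) : ℂ) = inner ℂ (φ : H) (A ψ)
  closed : A.IsClosed
  regular : ∀ x : ℝ, ∃ c > 0, ∀ φ : A.domain, c * ‖(φ : H)‖ ≤ ‖A φ - (x : ℂ) • (φ : H)‖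
  deficiency : ∀ z : ℂ, z.im ≠ 0 → ∃ ψ₀ ∈ defectSet A z, ψ₀ ≠ 0 ∧
      ∀ ψ ∈ defectSet A z, ∃ c : ℂ, ψ = c • ψ₀
  simple : (Submodule.span ℂ (⋃ z ∈ {z : ℂ | z.im ≠ 0}, defectSet A z)).topologicalClosure = ⊤

/-- `B` is a selfadjoint extension of `A`. -/
def IsSelfAdjointExt (A B : H →ₗ.[ℂ] H) : Prop :=
  A ≤ B ∧ B.adjoint = B

/-- The spectrum of a partially defined operator `B`: the set of `z` such that
`B - z·I : dom(B) → H` is not bijective. -/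
def pSpec (B : H →ₗ.[ℂ] H) : Set ℂ :=
  {z : ℂ | ¬ Function.Bijective fun φ : B.domain => B φ - z • (φ : H)}

open Filter Topology
open scoped NNReal

section ClosedRange

variable {𝕜 E : Type*} [NontriviallyNormedField 𝕜] [NormedAddCommGroup E] [NormedSpace 𝕜 E]

def LinearPMap.shift (A : E →ₗ.[𝕜] E) (z : 𝕜) : A.domain →ₗ[𝕜] E :=
  A.toFun - z • A.domain.subtype

@[simp]
lemma LinearPMap.shift_apply (A : E →ₗ.[𝕜] E) (z : 𝕜) (φ : A.domain) :
    A.shift z φ = A φ - z • (φ : E) := rfl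

lemma AntilipschitzWith.cauchySeq_of_comp {α β : Type*} [PseudoEMetricSpace α]
    [PseudoEMetricSpace β] {K : ℝ≥0} {f : α → β} (hf : AntilipschitzWith K f) {u : ℕ → α}
    (hu : CauchySeq (f ∘ u)) : CauchySeq u := by
  rw [cauchySeq_iff_tendsto] at hu ⊢
  exact (tendsto_comap_iff.mpr (show Tendsto (Prod.map f f ∘ Prod.map u u) _ _ from hu)).mono_right
    hf.comap_uniformity_le

lemma antilipschitzWith_shift {A : E →ₗ.[𝕜] E} {z : 𝕜} {c : ℝ} (hc : 0 < c)
    (h : ∀ φ : A.domain, c * ‖(φ : E)‖ ≤ ‖A.shift z φ‖) :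
    AntilipschitzWith (Real.toNNReal c⁻¹) (A.shift z) :=
  AddMonoidHomClass.antilipschitz_of_bound _ fun φ => by
    rw [Real.coe_toNNReal _ (inv_nonneg.mpr hc.le), inv_mul_eq_div, le_div_iff₀' hc]
    exact h φ

variable [CompleteSpace E]

lemma isClosed_range_shift {A : E →ₗ.[𝕜] E} (hA : A.IsClosed) {z : 𝕜} {K : ℝ≥0}
    (hK : AntilipschitzWith K (A.shift z)) :
    IsClosed (LinearMap.range (A.shift z) : Set E) := by
  refine IsSeqClosed.isClosed fun {y p} hy hyp => ?_
  choose φ hφ using fun n => LinearMap.mem_range.mp (hy n)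
  have hφ_cauchy : CauchySeq fun n => (φ n : E) :=
    uniformContinuous_subtype_val.comp_cauchySeq
      (hK.cauchySeq_of_comp (by simpa only [Function.comp_def, hφ] using hyp.cauchySeq))
  obtain ⟨q, hq⟩ := cauchySeq_tendsto_of_complete hφ_cauchy
  have hAφ : Tendsto (fun n => A (φ n)) atTop (𝓝 (p + z • q)) := by
    have h : (fun n => A (φ n)) = fun n => y n + z • (φ n : E) := by
      funext n; rw [← hφ n, LinearPMap.shift_apply, sub_add_cancel]
    exact h ▸ hyp.add (hq.const_smul z)
  have hq_graph : (q, p + z • q) ∈ A.graph :=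
    hA.mem_of_tendsto (hq.prodMk_nhds hAφ) (Eventually.of_forall fun n => A.mem_graph (φ n))
  obtain ⟨q', rfl, hAq'⟩ := A.mem_graph_iff.mp hq_graph
  exact ⟨q', by rw [LinearPMap.shift_apply, hAq', add_sub_cancel_right]⟩

end ClosedRange

local notation "⟪" x ", " y "⟫" => inner ℂ x y

namespace LinearPMap.IsFormalAdjoint

variable {E : Type*} [NormedAddCommGroup E] [InnerProductSpace ℂ E] {A : E →ₗ.[ℂ] E}

lemma im_inner_apply_self (hA : A.IsFormalAdjoint A) (φ : A.domain) :
    ⟪A φ, (φ : E)⟫.im = 0 :=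
  Complex.conj_eq_iff_im.mp (by rw [inner_conj_symm, hA φ φ])

lemma abs_im_mul_norm_le_norm_shift (hA : A.IsFormalAdjoint A) (z : ℂ) (φ : A.domain) :
    |z.im| * ‖(φ : E)‖ ≤ ‖A.shift z φ‖ := by
  have him : ⟪(φ : E), A.shift z φ⟫.im = -z.im * ‖(φ : E)‖ ^ 2 := by
    rw [LinearPMap.shift_apply, inner_sub_right, inner_smul_right, inner_self_eq_norm_sq_to_K,
      ← inner_conj_symm, Complex.sub_im, Complex.conj_im, hA.im_inner_apply_self φ]
    simp [Complex.mul_im, ← Complex.ofReal_pow]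
  rcases (norm_nonneg (φ : E)).eq_or_lt with h0 | hpos
  · rw [← h0, mul_zero]; exact norm_nonneg _
  refine le_of_mul_le_mul_right ?_ hpos
  calc |z.im| * ‖(φ : E)‖ * ‖(φ : E)‖ = |⟪(φ : E), A.shift z φ⟫.im| := by
        rw [him, abs_mul, abs_neg, abs_of_nonneg (sq_nonneg ‖(φ : E)‖)]; ring
    _ ≤ ‖⟪(φ : E), A.shift z φ⟫‖ := Complex.abs_im_le_norm _
    _ ≤ ‖(φ : E)‖ * ‖A.shift z φ‖ := norm_inner_le_norm _ _
    _ = ‖A.shift z φ‖ * ‖(φ : E)‖ := mul_comm _ _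

lemma eq_zero_of_apply_eq_smul (hA : A.IsFormalAdjoint A) {z : ℂ} (hz : z.im ≠ 0)
    {φ : A.domain} (h : A φ = z • (φ : E)) : (φ : E) = 0 := by
  have := hA.abs_im_mul_norm_le_norm_shift z φ
  rw [LinearPMap.shift_apply, h, sub_self, norm_zero] at this
  exact norm_le_zero_iff.mp (nonpos_of_mul_nonpos_right this (abs_pos.mpr hz))

end LinearPMap.IsFormalAdjoint

section Defect

variable {A : H →ₗ.[ℂ] H}

lemma defectSet_eq_orthogonal_range_shift (hd : Dense (A.domain : Set H)) (z : ℂ) :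
    defectSet A z = ((LinearMap.range (A.shift (conj z)))ᗮ : Set H) := by
  ext ψ
  simp only [defectSet, Set.mem_ofPred_eq, A.adjoint_graph_eq_graph_adjoint hd,
    Submodule.mem_adjoint_iff, LinearPMap.mem_graph_iff, SetLike.mem_coe,
    Submodule.mem_orthogonal, LinearMap.mem_range, forall_exists_index, and_imp,
    forall_comm (α := H), forall_eq', forall_apply_eq_imp_iff, LinearPMap.shift_apply,
    inner_sub_left, inner_smul_left, inner_smul_right, conj_conj]

lemma mem_range_shift_iff (hd : Dense (A.domain : Set H)) {z : ℂ}
    (hcl : IsClosed (LinearMap.range (A.shift z) : Set H)) {y : H} :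
    y ∈ LinearMap.range (A.shift z) ↔ ∀ η ∈ defectSet A (conj z), ⟪η, y⟫ = 0 := by
  rw [defectSet_eq_orthogonal_range_shift hd, conj_conj]
  simp only [SetLike.mem_coe]
  rw [← Submodule.mem_orthogonal, Submodule.orthogonal_orthogonal_eq_closure,
    hcl.submodule_topologicalClosure_eq]

lemma exists_ne_zero_mem_defectSet (hd : Dense (A.domain : Set H)) (hA : A.IsFormalAdjoint A)
    {x : ℝ} (hcl : IsClosed (LinearMap.range (A.shift x) : Set H)) {z : ℂ} (hz : z.im ≠ 0)
    {μ : H} (hμ : μ ∈ defectSet A z) (hμ0 : μ ≠ 0) : ∃ ψ ∈ defectSet A x, ψ ≠ 0 := by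
  -- Otherwise `A - x` is onto; solving `(A - x) φ = (z - x) μ` puts `μ - φ` in `ker(A* - x)`,
  -- so `μ = φ` would be an eigenvector of `A` with nonreal eigenvalue `z`.
  by_contra! h
  obtain ⟨φ, hφ⟩ : (z - x) • μ ∈ LinearMap.range (A.shift x) :=
    (mem_range_shift_iff hd hcl).mpr fun η hη => by
      rw [h η (by simpa only [Complex.conj_ofReal] using hη), inner_zero_left]
  rw [LinearPMap.shift_apply] at hφ
  have hφ_adj : ((φ : H), A φ) ∈ A.adjoint.graph :=
    LinearPMap.le_graph_of_le (hA.le_adjoint hd) (A.mem_graph φ)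
  have hdiff : μ - φ ∈ defectSet A x := by
    have hx : (x : ℂ) • (μ - φ) = z • μ - A φ := by linear_combination (norm := module) hφ
    simpa only [defectSet, Set.mem_ofPred_eq, hx, Prod.mk_sub_mk] using
      A.adjoint.graph.sub_mem hμ hφ_adj
  have hμφ : μ = φ := sub_eq_zero.mp (h _ hdiff)
  have hAφ : A φ = z • (φ : H) := by
    rw [← hμφ] at hφ ⊢
    linear_combination (norm := module) hφ
  exact hμ0 (hμφ ▸ hA.eq_zero_of_apply_eq_smul hz hAφ)

lemma shift_eq_zero_of_mem_defectSet (hd : Dense (A.domain : Set H)) (hA : A.IsFormalAdjoint A)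
    {x : ℝ} (hinj : Function.Injective (A.shift x)) {w : ℂ} (hw : w.im ≠ 0) {φ : A.domain}
    (hψ : A.shift w φ ∈ defectSet A x) : A.shift w φ = 0 := by
  set u := A.shift x φ with hu
  have hψu : A.shift w φ = u + (x - w) • (φ : H) := by
    rw [hu, LinearPMap.shift_apply, LinearPMap.shift_apply]; module
  have horth : ⟪u, A.shift w φ⟫ = 0 := by
    rw [defectSet_eq_orthogonal_range_shift hd, Complex.conj_ofReal] at hψ
    exact hψ u (LinearMap.mem_range_self _ φ)
  have hr_im : ⟪u, (φ : H)⟫.im = 0 := by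
    rw [hu, LinearPMap.shift_apply, inner_sub_left, inner_smul_left, Complex.sub_im,
      hA.im_inner_apply_self φ, Complex.conj_ofReal, inner_self_eq_norm_sq_to_K]
    simp [Complex.mul_im, ← Complex.ofReal_pow]
  -- `⟪u, u⟫` and `⟪u, φ⟫` are real, so the imaginary part of `horth` forces `⟪u, φ⟫ = 0`
  rw [hψu, inner_add_right, inner_smul_right] at horth
  have hr : ⟪u, (φ : H)⟫ = 0 := by
    have huu_im : ⟪u, u⟫.im = 0 := inner_self_im (𝕜 := ℂ) u
    have h := congrArg Complex.im horth
    simp only [Complex.add_im, Complex.mul_im, Complex.sub_im, Complex.ofReal_im, hr_im, huu_im,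
      Complex.zero_im, mul_zero, zero_add, zero_sub, neg_mul, neg_eq_zero] at h
    exact Complex.ext ((mul_eq_zero.mp h).resolve_left hw) hr_im
  have hu0 : u = 0 := by rwa [hr, mul_zero, add_zero, inner_self_eq_zero] at horth
  have hφ0 : φ = 0 := hinj (by rw [← hu, hu0, map_zero])
  rw [hφ0, map_zero]

end Defect

theorem exists_gauge_exceptional_set_disjoint_from_reals_general
    (A : H →ₗ.[ℂ] H) (hA : IsSymClass A) :
    ∃ μ : H, ∀ x : ℝ, ∃ ψ ∈ defectSet A (x : ℂ), (inner ℂ μ ψ : ℂ) ≠ 0 := by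
  have hI : (-I).im ≠ 0 := by simp
  have hI_closed : IsClosed (LinearMap.range (A.shift (-I)) : Set H) :=
    isClosed_range_shift hA.closed <| antilipschitzWith_shift (abs_pos.mpr hI)
      (LinearPMap.IsFormalAdjoint.abs_im_mul_norm_le_norm_shift hA.symmetric (-I))
  obtain ⟨μ, hμ, hμ0, hμ_span⟩ := hA.deficiency I (by simp)
  refine ⟨μ, fun x => ?_⟩
  obtain ⟨c, hc, hreg⟩ := hA.regular x
  have hx := antilipschitzWith_shift (A := A) hc hreg
  obtain ⟨ψ, hψ, hψ0⟩ := exists_ne_zero_mem_defectSet hA.dense hA.symmetric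
    (isClosed_range_shift hA.closed hx) (by simp) hμ hμ0
  refine ⟨ψ, hψ, fun hμψ => hψ0 ?_⟩
  obtain ⟨φ, rfl⟩ : ψ ∈ LinearMap.range (A.shift (-I)) :=
    (mem_range_shift_iff hA.dense hI_closed).mpr fun η hη => by
      obtain ⟨a, rfl⟩ := hμ_span η (by simpa using hη)
      rw [inner_smul_left, hμψ, mul_zero]
  exact shift_eq_zero_of_mem_defectSet hA.dense hA.symmetric hx.injective hI hψ

/-- Krein's theorem: for every `A ∈ Sym` there exists a gauge `μ` whose exceptional
set `S_μ` does not intersect the real line, i.e. for every real `x` there is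
`ψ ∈ ker(A* - x·I)` with `⟨μ, ψ⟩ ≠ 0`. -/
theorem exists_gauge_exceptional_set_disjoint_from_reals
    [TopologicalSpace.SeparableSpace H]
    (A : H →ₗ.[ℂ] H) (hA : IsSymClass A) :
    ∃ μ : H, ∀ x : ℝ, ∃ ψ ∈ defectSet A (x : ℂ), (inner ℂ μ ψ : ℂ) ≠ 0 :=
  exists_gauge_exceptional_set_disjoint_from_reals_general A hA

end
end

section
/- Let e be a Hermite-Biehler function having no real zeros and let γ ∈ (0, π). Define ĕ(z) := −s_γ(z) − i·s₀(z). Then ĕ is also a Hermite-Biehler function and has no real zeros; moreover, denoting by s̆_β the functions built from ĕ in place of e, one has s̆₀(z) = s₀(z) and s̆_{π/2}(z) = s_γ(z) for all z ∈ ℂ. -/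
/-!
Both `ĕ` and `ĕ#` are constant linear combinations of `e` and `e#`: `ĕ = A e - B e#` with
`A = (1 - i e^{iγ})/2`, `B = (1 - i e^{-iγ})/2`, and `ĕ# = Ā e# - B̄ e`. For any such pair
`|ĕ|² - |ĕ#|² = (|A|² - |B|²)(|e|² - |e#|²)`, and here `|A|² - |B|² = sin γ > 0`, so the
Hermite-Biehler inequality passes from `e` to `ĕ`. On the real line `|e#| = |e|`, so
`|A e| > |B e#|` rules out real zeros. The identities for `s̆₀` and `s̆_{π/2}` reduce to
`A + B̄ = 1` and `A - B̄ = -i e^{iγ}`.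
-/

open Complex ComplexConjugate Real

noncomputable section

/-- `e#(z) := conj (e (conj z))`. -/
def esharp (e : ℂ → ℂ) (z : ℂ) : ℂ := conj (e (conj z))

/-- An entire function `e` is of Hermite-Biehler class if it has no zeros in the open
upper half-plane and `|e(z)| > |e#(z)|` there. -/
def HermiteBiehler (e : ℂ → ℂ) : Prop :=
  Differentiable ℂ e ∧ (∀ z : ℂ, 0 < z.im → e z ≠ 0) ∧
    ∀ z : ℂ, 0 < z.im → ‖esharp e z‖ < ‖e z‖

/-- `s_β(z) := (i/2) (e^{iβ} e(z) - e^{-iβ} e#(z))`. -/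
def sfun (e : ℂ → ℂ) (β : ℝ) (z : ℂ) : ℂ :=
  (Complex.I / 2) * (Complex.exp (Complex.I * β) * e z
    - Complex.exp (-(Complex.I * β)) * esharp e z)

theorem esharp_apply_ofReal (e : ℂ → ℂ) (x : ℝ) : esharp e x = conj (e x) := by
  simp [esharp]

theorem esharp_mul_sub_mul_esharp (A B : ℂ) (e : ℂ → ℂ) :
    esharp (fun z => A * e z - B * esharp e z) = fun z => conj A * esharp e z - conj B * e z := by
  ext z
  simp [esharp]

theorem Differentiable.esharp {e : ℂ → ℂ} (he : Differentiable ℂ e) :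
    Differentiable ℂ (esharp e) :=
  fun _ => differentiableAt_conj_conj_iff.2 (he _)

theorem normSq_mul_sub_mul_sub_normSq_conj (A B u v : ℂ) :
    normSq (A * u - B * v) - normSq (conj A * v - conj B * u)
      = (normSq A - normSq B) * (normSq u - normSq v) := by
  apply ofReal_injective
  push_cast
  simp only [← mul_conj, map_sub, map_mul, conj_conj]
  ring

section MulSubMulEsharp

variable {e : ℂ → ℂ} {A B : ℂ}

theorem HermiteBiehler.mul_sub_mul_esharp (he : HermiteBiehler e) (hAB : normSq B < normSq A) :
    HermiteBiehler (fun z => A * e z - B * esharp e z) := by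
  obtain ⟨hdiff, -, hlt⟩ := he
  have hpos : ∀ z : ℂ, 0 < z.im →
      normSq (conj A * esharp e z - conj B * e z) < normSq (A * e z - B * esharp e z) := by
    intro z hz
    have he_sq : normSq (esharp e z) < normSq (e z) := by
      simpa only [← Complex.sq_norm] using pow_lt_pow_left₀ (hlt z hz) (norm_nonneg _) two_ne_zero
    have := normSq_mul_sub_mul_sub_normSq_conj A B (e z) (esharp e z)
    linarith [mul_pos (sub_pos.2 hAB) (sub_pos.2 he_sq)]
  refine ⟨?_, fun z hz h0 => ?_, fun z hz => ?_⟩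
  · exact (hdiff.const_mul A).sub (hdiff.esharp.const_mul B)
  · have := hpos z hz
    simp only [h0, map_zero] at this
    exact (normSq_nonneg _).not_gt this
  · rw [esharp_mul_sub_mul_esharp, ← sq_lt_sq₀ (norm_nonneg _) (norm_nonneg _),
      Complex.sq_norm, Complex.sq_norm]
    exact hpos z hz

theorem mul_sub_mul_esharp_ofReal_ne_zero {x : ℝ} (hx : e x ≠ 0) (hAB : normSq B < normSq A) :
    A * e x - B * esharp e x ≠ 0 := by
  rw [sub_ne_zero, esharp_apply_ofReal]
  intro h
  have := congrArg normSq h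
  rw [normSq_mul, normSq_mul, normSq_conj] at this
  exact hAB.ne' (mul_right_cancel₀ (normSq_eq_zero.not.2 hx) this)

theorem sfun_mul_sub_mul_esharp (β : ℝ) (z : ℂ) :
    sfun (fun w => A * e w - B * esharp e w) β z
      = I / 2 * ((exp (I * β) * A + exp (-(I * β)) * conj B) * e z
        - (exp (I * β) * B + exp (-(I * β)) * conj A) * esharp e z) := by
  rw [sfun, esharp_mul_sub_mul_esharp]
  ring

end MulSubMulEsharp

def breveCoeff (β : ℝ) : ℂ := (1 - I * exp (I * β)) / 2

theorem normSq_breveCoeff (β : ℝ) : normSq (breveCoeff β) = (1 + Real.sin β) / 2 := by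
  rw [breveCoeff, mul_comm I (β : ℂ), exp_mul_I]
  have : (1 - I * (Complex.cos β + Complex.sin β * I)) / 2
      = ((1 + Real.sin β) / 2 : ℝ) + ((-Real.cos β / 2 : ℝ)) * I := by
    push_cast
    linear_combination (-Complex.sin β / 2) * I_sq
  rw [this, normSq_add_mul_I]
  nlinarith [Real.sin_sq_add_cos_sq β]

theorem conj_breveCoeff (β : ℝ) : conj (breveCoeff β) = 1 - breveCoeff (-β) := by
  simp only [breveCoeff, map_div₀, map_sub, map_mul, map_one, map_ofNat, conj_I, ← exp_conj,
    conj_ofReal, ofReal_neg]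
  ring_nf

theorem neg_sfun_sub_I_mul_sfun_zero (e : ℂ → ℂ) (γ : ℝ) (z : ℂ) :
    -sfun e γ z - I * sfun e 0 z = breveCoeff γ * e z - breveCoeff (-γ) * esharp e z := by
  simp only [sfun, breveCoeff, ofReal_zero, mul_zero, neg_zero, Complex.exp_zero, ofReal_neg,
    mul_neg]
  linear_combination (-(e z - esharp e z) / 2) * I_sq

theorem normSq_breveCoeff_neg_lt {γ : ℝ} (hγ : γ ∈ Set.Ioo 0 π) :
    normSq (breveCoeff (-γ)) < normSq (breveCoeff γ) := by
  rw [normSq_breveCoeff, normSq_breveCoeff, Real.sin_neg]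
  linarith [sin_pos_of_pos_of_lt_pi hγ.1 hγ.2]

theorem sfun_breve_zero (e : ℂ → ℂ) (γ : ℝ) (z : ℂ) :
    sfun (fun w => breveCoeff γ * e w - breveCoeff (-γ) * esharp e w) 0 z = sfun e 0 z := by
  rw [sfun_mul_sub_mul_esharp, conj_breveCoeff, conj_breveCoeff, neg_neg, sfun]
  simp only [ofReal_zero, mul_zero, neg_zero, Complex.exp_zero]
  ring

theorem sfun_breve_pi_div_two (e : ℂ → ℂ) (γ : ℝ) (z : ℂ) :
    sfun (fun w => breveCoeff γ * e w - breveCoeff (-γ) * esharp e w) (π / 2) z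
      = sfun e γ z := by
  have hI : exp (I * ↑(π / 2)) = I := by
    rw [show I * ↑(π / 2) = π / 2 * I by push_cast; ring, exp_pi_div_two_mul_I]
  have hnegI : exp (-(I * ↑(π / 2))) = -I := by
    rw [show -(I * ↑(π / 2)) = -π / 2 * I by push_cast; ring, exp_neg_pi_div_two_mul_I]
  rw [sfun_mul_sub_mul_esharp, conj_breveCoeff, conj_breveCoeff, neg_neg, sfun, hI, hnegI]
  simp only [breveCoeff, ofReal_neg, mul_neg]
  linear_combination (-I / 2 * (exp (I * γ) * e z - exp (-(I * γ)) * esharp e z)) * I_sq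

/-- Lemma 3.4: if `e` is Hermite-Biehler without real zeros and `γ ∈ (0,π)`, then
`ĕ := -s_γ - i s₀` is Hermite-Biehler without real zeros, and `s̆₀ = s₀`,
`s̆_{π/2} = s_γ`. -/
theorem hermiteBiehler_breve
    (e : ℂ → ℂ) (he : HermiteBiehler e) (heReal : ∀ x : ℝ, e x ≠ 0)
    (γ : ℝ) (hγ : γ ∈ Set.Ioo 0 π) :
    HermiteBiehler (fun z => -sfun e γ z - Complex.I * sfun e 0 z) ∧
    (∀ x : ℝ, -sfun e γ x - Complex.I * sfun e 0 x ≠ 0) ∧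
    (∀ z : ℂ, sfun (fun w => -sfun e γ w - Complex.I * sfun e 0 w) 0 z = sfun e 0 z) ∧
    (∀ z : ℂ, sfun (fun w => -sfun e γ w - Complex.I * sfun e 0 w) (π / 2) z = sfun e γ z) := by
  have hAB := normSq_breveCoeff_neg_lt hγ
  simp only [neg_sfun_sub_I_mul_sfun_zero]
  exact ⟨he.mul_sub_mul_esharp hAB, fun x => mul_sub_mul_esharp_ofReal_ne_zero (heReal x) hAB,
    sfun_breve_zero e γ, sfun_breve_pi_div_two e γ⟩

end
end

section
/- Let e be a Hermite-Biehler function. For z, w ∈ ℂ with z ≠ w̄ define the reproducing kernel k(z, w) := (e#(z)·e(w̄) − e(z)·e#(w̄)) / (2πi·(z − w̄)). Then for every z in the open upper half-plane ℂ⁺ one has k(z, z) = (|e(z)|² − |e#(z)|²) / (4π·Im z) > 0, and for all z, w ∈ ℂ⁺ one has k(z, w) ≠ 0. -/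
/-! Since `e(w̄) = conj (e#(w))` and `e#(w̄) = conj (e(w))`, the numerator of `k(z, w)` is
`e#(z)·conj (e#(w)) − e(z)·conj (e(w))`. On the diagonal it is `|e#(z)|² − |e(z)|²`, while
`z − z̄ = 2i·Im z`. Off the diagonal it cannot vanish for `z, w ∈ ℂ⁺`, because
`|e#(z)|·|e#(w)| < |e(z)|·|e(w)|`, and neither can `z − w̄`, whose imaginary part is
`Im z + Im w`. -/

open Complex ComplexConjugate Real

noncomputable section

/-- The reproducing kernel of the de Branges space `B(e)`. -/
def dBKernel (e : ℂ → ℂ) (z w : ℂ) : ℂ :=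
  (esharp e z * e (conj w) - e z * esharp e (conj w)) / (2 * π * Complex.I * (z - conj w))

theorem esharp_conj (e : ℂ → ℂ) (z : ℂ) : esharp e (conj z) = conj (e z) := by
  simp [esharp]

theorem conj_esharp (e : ℂ → ℂ) (z : ℂ) : conj (esharp e z) = e (conj z) := by
  simp [esharp]

/-- Valid for all `z`: on the real line both sides are `0` through division by zero. -/
theorem dBKernel_self (e : ℂ → ℂ) (z : ℂ) :
    dBKernel e z z = (((‖e z‖) ^ 2 - (‖esharp e z‖) ^ 2) / (4 * π * z.im) : ℝ) := by
  have hnum : esharp e z * e (conj z) - e z * esharp e (conj z)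
      = ((‖esharp e z‖ ^ 2 - ‖e z‖ ^ 2 : ℝ) : ℂ) := by
    rw [← conj_esharp e z, esharp_conj, mul_conj, mul_conj, ← Complex.sq_norm,
      ← Complex.sq_norm]
    push_cast
    ring
  have hden : 2 * π * I * (z - conj z) = ((-(4 * π * z.im) : ℝ) : ℂ) := by
    rw [sub_conj]
    push_cast
    linear_combination (4 * π * z.im : ℂ) * I_sq
  rw [dBKernel, hnum, hden, ← ofReal_div, div_neg, ← neg_div, neg_sub]

theorem dBKernel_ne_zero {e : ℂ → ℂ} {z w : ℂ} (hz : ‖esharp e z‖ < ‖e z‖)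
    (hw : ‖esharp e w‖ < ‖e w‖) (hzw : z ≠ conj w) : dBKernel e z w ≠ 0 := by
  have hlt : ‖esharp e z * e (conj w)‖ < ‖e z * esharp e (conj w)‖ := by
    rw [← conj_esharp e w, esharp_conj, norm_mul, norm_mul, norm_conj, norm_conj]
    exact mul_lt_mul'' hz hw (norm_nonneg _) (norm_nonneg _)
  have hnum : esharp e z * e (conj w) - e z * esharp e (conj w) ≠ 0 :=
    sub_ne_zero.2 fun h => hlt.ne (congrArg norm h)
  have hden : 2 * (π : ℂ) * I * (z - conj w) ≠ 0 := by
    simp [pi_ne_zero, I_ne_zero, sub_eq_zero, hzw]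
  exact div_ne_zero hnum hden

/-- For a Hermite-Biehler function `e`: on the open upper half-plane the diagonal of the
reproducing kernel equals `(|e(z)|² - |e#(z)|²)/(4π·Im z) > 0`, and the kernel has no
zeros for `z, w` in the open upper half-plane. -/
theorem dBKernel_diag_pos_and_nonvanishing
    (e : ℂ → ℂ) (he : HermiteBiehler e) :
    (∀ z : ℂ, 0 < z.im →
      dBKernel e z z =
        (((‖e z‖) ^ 2 - (‖esharp e z‖) ^ 2) / (4 * π * z.im) : ℝ) ∧
      0 < ((‖e z‖) ^ 2 - (‖esharp e z‖) ^ 2) / (4 * π * z.im)) ∧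
    ∀ z w : ℂ, 0 < z.im → 0 < w.im → dBKernel e z w ≠ 0 := by
  obtain ⟨-, -, hlt⟩ := he
  refine ⟨fun z hz => ⟨dBKernel_self e z, ?_⟩, fun z w hz hw => ?_⟩
  · have hsq : ‖esharp e z‖ ^ 2 < ‖e z‖ ^ 2 :=
      pow_lt_pow_left₀ (hlt z hz) (norm_nonneg _) two_ne_zero
    exact div_pos (sub_pos.2 hsq) (by positivity)
  · refine dBKernel_ne_zero (hlt z hz) (hlt w hw) fun h => ?_
    have him := congrArg Complex.im h
    simp only [conj_im] at him
    linarith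

end
end

section
/- Let w ∈ ℂ∖ℝ and u ∈ dom(A); set φ := Au − wu and η := Au − w̄u. Then ‖η‖ = ‖φ‖ and, for every z ∈ ℂ with z ≠ w, η̂(z) = ((z − w̄)/(z − w))·φ̂(z). (In particular φ̂(w) = 0, so η̂ is the entire function obtained from φ̂ by moving the zero w to w̄.) -/
open Complex ComplexConjugate

noncomputable section

variable {H : Type*} [NormedAddCommGroup H] [InnerProductSpace ℂ H] [CompleteSpace H]

/-! Since `A* ξ(z̄) = z̄ ξ(z̄)`, moving `A` across the inner product gives
`⟪ξ(z̄), Au - c u⟫ = (z - c) ⟪ξ(z̄), u⟫` for every `c`, so both hats are multiples of the same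
function `z ↦ ⟪ξ(z̄), u⟫`. The norms agree because `⟪Au, u⟫` is real by symmetry. -/

section

variable {E : Type*} [NormedAddCommGroup E] [InnerProductSpace ℂ E]

/-- When `⟪a, b⟫` is real, `‖a - c • b‖` depends on `w` only through `re w` and `|w|`. -/
theorem norm_sub_conj_smul_eq_norm_sub_smul {a b : E} (hab : (inner ℂ a b : ℂ) = inner ℂ b a)
    (w : ℂ) : ‖a - conj w • b‖ = ‖a - w • b‖ := by
  have him : (inner ℂ a b : ℂ).im = 0 := by
    have := congrArg Complex.im hab
    rw [← inner_conj_symm b a, Complex.conj_im] at this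
    linarith
  have hre : RCLike.re (conj w * inner ℂ a b) = RCLike.re (w * inner ℂ a b) := by
    simp [RCLike.re_to_complex, him]
  refine (pow_left_inj₀ (norm_nonneg _) (norm_nonneg _) two_ne_zero).mp ?_
  rw [@norm_sub_sq ℂ, @norm_sub_sq ℂ, inner_smul_right, inner_smul_right, norm_smul, norm_smul,
    hre, RCLike.norm_conj]

variable [CompleteSpace E]

theorem inner_sub_smul_of_adjoint_apply_eq_smul {A : E →ₗ.[ℂ] E}
    (hA : Dense (A.domain : Set E)) {ψ : A.adjoint.domain} {μ : ℂ} (hψ : A.adjoint ψ = μ • (ψ : E))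
    (u : A.domain) (c : ℂ) :
    (inner ℂ (ψ : E) (A u - c • (u : E)) : ℂ) = (conj μ - c) * inner ℂ (ψ : E) (u : E) := by
  rw [inner_sub_right, inner_smul_right, ← A.adjoint_isFormalAdjoint hA ψ u, hψ,
    inner_smul_left, sub_mul]

end

theorem hat_of_cayley_transform_general
    (A : H →ₗ.[ℂ] H) (hA : IsSymClass A)
    (ξ : ℂ → H)
    (hdom : ∀ z : ℂ, ξ z ∈ A.adjoint.domain)
    (heig : ∀ z : ℂ, A.adjoint ⟨ξ z, hdom z⟩ = z • ξ z)
    (w : ℂ) (u : A.domain) :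
    ‖A u - (conj w) • (u : H)‖ = ‖A u - w • (u : H)‖ ∧
    ∀ z : ℂ, z ≠ w →
      (inner ℂ (ξ (conj z)) (A u - (conj w) • (u : H)) : ℂ) =
        ((z - conj w) / (z - w)) * (inner ℂ (ξ (conj z)) (A u - w • (u : H)) : ℂ) := by
  have hhat (z c : ℂ) : (inner ℂ (ξ (conj z)) (A u - c • (u : H)) : ℂ) =
      (z - c) * inner ℂ (ξ (conj z)) (u : H) := by
    simpa only [conj_conj] using inner_sub_smul_of_adjoint_apply_eq_smul hA.dense (ψ := ⟨_, hdom (conj z)⟩)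
      (heig (conj z)) u c
  refine ⟨norm_sub_conj_smul_eq_norm_sub_smul (hA.symmetric u u) w, fun z hz => ?_⟩
  have hzw : z - w ≠ 0 := sub_ne_zero.mpr hz
  rw [hhat, hhat]
  field_simp

/-- Step 2 of Proposition 4.2 (axiom (A2)): for `w` nonreal and `u ∈ dom A`, with
`φ := Au - w·u` and `η := Au - w̄·u`, one has `‖η‖ = ‖φ‖` and
`η̂(z) = ((z - w̄)/(z - w))·φ̂(z)` for `z ≠ w`, where `φ̂(z) = ⟨ξ(z̄), φ⟩`. -/
theorem hat_of_cayley_transform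
    [TopologicalSpace.SeparableSpace H]
    (A : H →ₗ.[ℂ] H) (hA : IsSymClass A)
    (ξ : ℂ → H) (hξdiff : Differentiable ℂ ξ)
    (hdom : ∀ z : ℂ, ξ z ∈ A.adjoint.domain)
    (heig : ∀ z : ℂ, A.adjoint ⟨ξ z, hdom z⟩ = z • ξ z)
    (hξne : ∀ z : ℂ, ξ z ≠ 0)
    (w : ℂ) (hw : w.im ≠ 0) (u : A.domain) :
    ‖A u - (conj w) • (u : H)‖ = ‖A u - w • (u : H)‖ ∧
    ∀ z : ℂ, z ≠ w →
      (inner ℂ (ξ (conj z)) (A u - (conj w) • (u : H)) : ℂ) =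
        ((z - conj w) / (z - w)) * (inner ℂ (ξ (conj z)) (A u - w • (u : H)) : ℂ) :=
  hat_of_cayley_transform_general A hA ξ hdom heig w u

end
end

section
/- (i) For every φ ∈ dom(A) and every z ∈ ℂ one has ⟨ξ(z̄), Aφ⟩ = z·⟨ξ(z̄), φ⟩, i.e. (Aφ)^(z) = z·φ̂(z). (ii) Conversely, if φ, χ ∈ H satisfy ⟨ξ(z̄), χ⟩ = z·⟨ξ(z̄), φ⟩ for every z ∈ ℂ, then φ ∈ dom(A) and Aφ = χ. Hence, under the injection Φ : φ ↦ φ̂, the operator A corresponds exactly to the operator of multiplication by the independent variable on Ĥ, with domain Φ(dom A). -/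
/-
The relation `(Aφ)^ = z φ̂` is just the eigenvalue equation `A* ξ(z̄) = z̄ ξ(z̄)` moved across the
inner product. For the converse, symmetry gives `‖(A - i)θ‖ ≥ ‖θ‖`, so `A - i` has closed range
because `A` is closed, and this range is the orthogonal complement of `ker(A* + i) = ℂ ξ(-i)`.
The hypothesis at `z = i` says `χ - iφ ⊥ ξ(-i)`, hence `χ - iφ = (A - i)η` for some `η ∈ dom A`.
Comparing with the hypothesis at every `z` gives `(z - i)(η - φ)^(z) = 0`, so by continuity
`η - φ` is orthogonal to every `ξ(u)`; since every defect space is spanned by a `ξ(u)`,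
simplicity forces `η = φ`.
-/

open Complex ComplexConjugate

noncomputable section

variable {H : Type*} [NormedAddCommGroup H] [InnerProductSpace ℂ H] [CompleteSpace H]

section Shifted

variable {E : Type*} [NormedAddCommGroup E] [InnerProductSpace ℂ E] {A : E →ₗ.[ℂ] E} {z : ℂ}

variable (A z) in
def shiftedMap : A.domain →ₗ[ℂ] E :=
  A.toFun - z • A.domain.subtype

@[simp]
lemma shiftedMap_apply (θ : A.domain) : shiftedMap A z θ = A θ - z • (θ : E) := rfl

lemma abs_im_mul_norm_le_norm_shiftedMap (hsymm : A.IsFormalAdjoint A) (θ : A.domain) :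
    |z.im| * ‖(θ : E)‖ ≤ ‖shiftedMap A z θ‖ := by
  have hreal : (inner ℂ (θ : E) (A θ)).im = 0 :=
    conj_eq_iff_im.mp (by rw [inner_conj_symm, hsymm θ θ])
  have him : (inner ℂ (θ : E) (shiftedMap A z θ)).im = -(z.im * ‖(θ : E)‖ ^ 2) := by
    rw [shiftedMap_apply, inner_sub_right, inner_smul_right, inner_self_eq_norm_sq_to_K]
    simp [hreal, ← ofReal_pow]
  have hcs : |z.im| * ‖(θ : E)‖ ^ 2 ≤ ‖(θ : E)‖ * ‖shiftedMap A z θ‖ :=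
    calc |z.im| * ‖(θ : E)‖ ^ 2 = |(inner ℂ (θ : E) (shiftedMap A z θ)).im| := by
          rw [him, abs_neg, abs_mul, abs_of_nonneg (sq_nonneg ‖(θ : E)‖)]
      _ ≤ ‖inner ℂ (θ : E) (shiftedMap A z θ)‖ := abs_im_le_norm _
      _ ≤ ‖(θ : E)‖ * ‖shiftedMap A z θ‖ := norm_inner_le_norm _ _
  rcases (norm_nonneg (θ : E)).eq_or_lt with h0 | hpos
  · rw [← h0, mul_zero]
    exact norm_nonneg _
  · nlinarith

end Shifted

section Operator

variable {A : H →ₗ.[ℂ] H} {z : ℂ}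

lemma mem_defectSet_iff {ψ : H} :
    ψ ∈ defectSet A z ↔ ∃ h : ψ ∈ A.adjoint.domain, A.adjoint ⟨ψ, h⟩ = z • ψ := by
  simp only [defectSet, Set.mem_ofPred_eq, LinearPMap.mem_graph_iff]
  constructor
  · rintro ⟨⟨ψ', h⟩, rfl, hψ⟩
    exact ⟨h, hψ⟩
  · rintro ⟨h, hψ⟩
    exact ⟨⟨ψ, h⟩, rfl, hψ⟩

lemma inner_apply_of_mem_defectSet (hdense : Dense (A.domain : Set H)) {ψ : H}
    (hψ : ψ ∈ defectSet A z) (φ : A.domain) :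
    inner ℂ ψ (A φ) = conj z * inner ℂ ψ (φ : H) := by
  obtain ⟨hψdom, hAψ⟩ := mem_defectSet_iff.mp hψ
  rw [← LinearPMap.adjoint_isFormalAdjoint hdense ⟨ψ, hψdom⟩ φ, hAψ, inner_smul_left]

lemma mem_defectSet_of_mem_orthogonal_range (hdense : Dense (A.domain : Set H)) {ψ : H}
    (hψ : ψ ∈ (LinearMap.range (shiftedMap A z))ᗮ) : ψ ∈ defectSet A (conj z) := by
  have hadj : ∀ θ : A.domain, inner ℂ (conj z • ψ) (θ : H) = inner ℂ ψ (A θ) := by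
    intro θ
    have horth := (Submodule.mem_orthogonal _ ψ).mp hψ _ (LinearMap.mem_range_self _ θ)
    rw [shiftedMap_apply, inner_sub_left, sub_eq_zero, inner_smul_left] at horth
    rw [← inner_conj_symm ψ, horth, inner_smul_left, map_mul, inner_conj_symm, conj_conj]
  have hdom : ψ ∈ A.adjoint.domain := LinearPMap.mem_adjoint_domain_of_exists ψ ⟨_, hadj⟩
  exact mem_defectSet_iff.mpr ⟨hdom, LinearPMap.adjoint_apply_eq hdense ⟨ψ, hdom⟩ hadj⟩

lemma isClosed_range_shiftedMap (hcl : A.IsClosed) {c : ℝ} (hc : 0 < c)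
    (hbound : ∀ θ : A.domain, c * ‖(θ : H)‖ ≤ ‖shiftedMap A z θ‖) :
    IsClosed (LinearMap.range (shiftedMap A z) : Set H) := by
  rw [← isSeqClosed_iff_isClosed]
  intro y p hy hyp
  choose θ hθ using fun n => LinearMap.mem_range.mp (hy n)
  have hcauchy : CauchySeq fun n => (θ n : H) := by
    refine Metric.cauchySeq_iff.mpr fun ε hε => ?_
    obtain ⟨N, hN⟩ := Metric.cauchySeq_iff.mp hyp.cauchySeq (c * ε) (mul_pos hc hε)
    refine ⟨N, fun m hm n hn => lt_of_mul_lt_mul_left ?_ hc.le⟩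
    calc c * dist (θ m : H) (θ n) ≤ ‖shiftedMap A z (θ m - θ n)‖ := by
          rw [dist_eq_norm]
          exact hbound (θ m - θ n)
      _ = dist (y m) (y n) := by rw [map_sub, hθ m, hθ n, dist_eq_norm]
      _ < c * ε := hN m hm n hn
  obtain ⟨x, hx⟩ := cauchySeq_tendsto_of_complete hcauchy
  have hAθ : Filter.Tendsto (fun n => A (θ n)) Filter.atTop (nhds (p + z • x)) := by
    have hAθ_eq : (fun n => A (θ n)) = fun n => y n + z • (θ n : H) := by
      funext n
      rw [← hθ n, shiftedMap_apply, sub_add_cancel]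
    exact hAθ_eq ▸ hyp.add (hx.const_smul z)
  have hgraph : (x, p + z • x) ∈ A.graph :=
    hcl.mem_of_tendsto (hx.prodMk_nhds hAθ) (.of_forall fun n => A.mem_graph (θ n))
  obtain ⟨u, rfl, hu⟩ := (LinearPMap.mem_graph_iff A).mp hgraph
  exact ⟨u, by rw [shiftedMap_apply, hu, add_sub_cancel_right]⟩

lemma mem_range_shiftedMap_of_forall_inner_eq_zero (hdense : Dense (A.domain : Set H))
    (hsymm : A.IsFormalAdjoint A) (hcl : A.IsClosed) (hz : z.im ≠ 0) {x : H}
    (hx : ∀ ψ ∈ defectSet A (conj z), inner ℂ ψ x = 0) :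
    x ∈ LinearMap.range (shiftedMap A z) := by
  have hclosed := isClosed_range_shiftedMap hcl (abs_pos.mpr hz)
    (abs_im_mul_norm_le_norm_shiftedMap hsymm)
  have hx' : x ∈ (LinearMap.range (shiftedMap A z))ᗮᗮ := fun ψ hψ =>
    hx ψ (mem_defectSet_of_mem_orthogonal_range hdense hψ)
  rw [Submodule.orthogonal_orthogonal_eq_closure] at hx'
  rwa [← SetLike.mem_coe, Submodule.topologicalClosure_coe, hclosed.closure_eq] at hx'

lemma exists_eq_smul_of_mem_defectSet
    (hdef : ∃ ψ₀ ∈ defectSet A z, ψ₀ ≠ 0 ∧ ∀ ψ ∈ defectSet A z, ∃ c : ℂ, ψ = c • ψ₀)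
    {ψ₁ ψ : H} (hψ₁ : ψ₁ ∈ defectSet A z) (hψ₁ne : ψ₁ ≠ 0) (hψ : ψ ∈ defectSet A z) :
    ∃ c : ℂ, ψ = c • ψ₁ := by
  obtain ⟨ψ₀, -, -, hspan⟩ := hdef
  obtain ⟨c, rfl⟩ := hspan ψ hψ
  obtain ⟨c₁, rfl⟩ := hspan ψ₁ hψ₁
  have hc₁ : c₁ ≠ 0 := by
    rintro rfl
    exact hψ₁ne (zero_smul ℂ ψ₀)
  exact ⟨c / c₁, by rw [smul_smul, div_mul_cancel₀ _ hc₁]⟩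

lemma IsSymClass.eq_zero_of_forall_inner_eq_zero (hA : IsSymClass A) {ξ : ℂ → H}
    (hξ : ∀ z, ξ z ∈ defectSet A z) (hξne : ∀ z, ξ z ≠ 0) {v : H}
    (hv : ∀ u, inner ℂ (ξ u) v = 0) : v = 0 := by
  have hmem : v ∈ (Submodule.span ℂ (⋃ z ∈ {z : ℂ | z.im ≠ 0}, defectSet A z))ᗮ := by
    rw [Submodule.mem_orthogonal]
    intro u hu
    induction hu using Submodule.span_induction with
    | mem u hu =>
      obtain ⟨z, hz, hu⟩ := Set.mem_iUnion₂.mp hu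
      obtain ⟨c, rfl⟩ := exists_eq_smul_of_mem_defectSet (hA.deficiency z hz) (hξ z) (hξne z) hu
      rw [inner_smul_left, hv z, mul_zero]
    | zero => exact inner_zero_left v
    | add x y _ _ hx hy => rw [inner_add_left, hx, hy, add_zero]
    | smul a x _ hx => rw [inner_smul_left, hx, mul_zero]
  rwa [Submodule.topologicalClosure_eq_top_iff.mp hA.simple, Submodule.mem_bot] at hmem

end Operator

lemma eq_zero_of_forall_sub_mul_eq_zero {f : ℂ → ℂ} (hf : Continuous f) (a : ℂ)
    (h : ∀ w, (w - a) * f w = 0) : f = 0 :=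
  Continuous.ext_on (dense_compl_singleton a) hf continuous_const fun w hw =>
    (mul_eq_zero.mp (h w)).resolve_left (sub_ne_zero.mpr hw)

theorem hat_map_intertwines_multiplication_general
    (A : H →ₗ.[ℂ] H) (hA : IsSymClass A)
    (ξ : ℂ → H) (hξdiff : Differentiable ℂ ξ)
    (hdom : ∀ z : ℂ, ξ z ∈ A.adjoint.domain)
    (heig : ∀ z : ℂ, A.adjoint ⟨ξ z, hdom z⟩ = z • ξ z)
    (hξne : ∀ z : ℂ, ξ z ≠ 0) :
    (∀ φ : A.domain, ∀ z : ℂ,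
      (inner ℂ (ξ (conj z)) (A φ) : ℂ) = z * (inner ℂ (ξ (conj z)) (φ : H) : ℂ)) ∧
    (∀ φ χ : H, (∀ z : ℂ, (inner ℂ (ξ (conj z)) χ : ℂ) = z * (inner ℂ (ξ (conj z)) φ : ℂ)) →
      ∃ hφ : φ ∈ A.domain, A ⟨φ, hφ⟩ = χ) := by
  have hξ : ∀ z, ξ z ∈ defectSet A z := fun z => mem_defectSet_iff.mpr ⟨hdom z, heig z⟩
  have hintertwine : ∀ φ : A.domain, ∀ z : ℂ,
      inner ℂ (ξ (conj z)) (A φ) = z * inner ℂ (ξ (conj z)) (φ : H) := fun φ z => by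
    rw [inner_apply_of_mem_defectSet hA.dense (hξ (conj z)) φ, conj_conj]
  refine ⟨hintertwine, fun φ χ hχ => ?_⟩
  have hrange : χ - I • φ ∈ LinearMap.range (shiftedMap A I) := by
    refine mem_range_shiftedMap_of_forall_inner_eq_zero hA.dense hA.symmetric hA.closed
      (by simp) fun ψ hψ => ?_
    rw [conj_I] at hψ
    obtain ⟨c, rfl⟩ := exists_eq_smul_of_mem_defectSet (hA.deficiency _ (by simp)) (hξ (-I))
      (hξne _) hψ
    rw [inner_smul_left, inner_sub_right, inner_smul_right, ← conj_I, hχ I, sub_self, mul_zero]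
  obtain ⟨⟨η, hη⟩, hAη⟩ := hrange
  rw [shiftedMap_apply] at hAη
  have hhat_zero : (fun w => inner ℂ (ξ (conj w)) (η - φ)) = 0 := by
    refine eq_zero_of_forall_sub_mul_eq_zero
      ((hξdiff.continuous.comp continuous_conj).inner continuous_const) I fun w => ?_
    have hAη_hat := congrArg (inner ℂ (ξ (conj w))) hAη
    rw [inner_sub_right, inner_sub_right, inner_smul_right, inner_smul_right, hintertwine, hχ w]
      at hAη_hat
    rw [inner_sub_right]
    linear_combination hAη_hat
  obtain rfl : η = φ := sub_eq_zero.mp <| hA.eq_zero_of_forall_inner_eq_zero hξ hξne fun u => by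
    simpa using congrFun hhat_zero (conj u)
  exact ⟨hη, by rwa [sub_left_inj] at hAη⟩

/-- Proposition 4.3 (part 1): under the injection `Φ : φ ↦ φ̂`, `φ̂(z) := ⟨ξ(z̄), φ⟩`,
the operator `A` corresponds exactly to multiplication by the independent variable:
(i) `(Aφ)^(z) = z·φ̂(z)` for `φ ∈ dom A`; (ii) conversely if `χ̂(z) = z·φ̂(z)` for all
`z`, then `φ ∈ dom A` and `Aφ = χ`. -/
theorem hat_map_intertwines_multiplication
    [TopologicalSpace.SeparableSpace H]
    (A : H →ₗ.[ℂ] H) (hA : IsSymClass A)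
    (ξ : ℂ → H) (hξdiff : Differentiable ℂ ξ)
    (hdom : ∀ z : ℂ, ξ z ∈ A.adjoint.domain)
    (heig : ∀ z : ℂ, A.adjoint ⟨ξ z, hdom z⟩ = z • ξ z)
    (hξne : ∀ z : ℂ, ξ z ≠ 0) :
    (∀ φ : A.domain, ∀ z : ℂ,
      (inner ℂ (ξ (conj z)) (A φ) : ℂ) = z * (inner ℂ (ξ (conj z)) (φ : H) : ℂ)) ∧
    (∀ φ χ : H, (∀ z : ℂ, (inner ℂ (ξ (conj z)) χ : ℂ) = z * (inner ℂ (ξ (conj z)) φ : ℂ)) →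
      ∃ hφ : φ ∈ A.domain, A ⟨φ, hφ⟩ = χ) :=
  hat_map_intertwines_multiplication_general A hA ξ hξdiff hdom heig hξne

end
end

section
/- Let H₊ denote dom(A*) endowed with the graph inner product ⟨φ, ψ⟩₊ := ⟨φ, ψ⟩ + ⟨A*φ, A*ψ⟩. For an entire function f : ℂ → ℂ the following are equivalent: (i) there exist φ, ψ ∈ H such that f(z) = φ̂(z) + z·ψ̂(z) for every z ∈ ℂ (i.e. f belongs to Ĥ + zĤ, the set of functions associated to Ĥ); (ii) there exists a linear functional η : dom(A*) → ℂ, continuous with respect to the graph norm of H₊, such that f(z) = conj(η(ξ(z̄))) for every z ∈ ℂ. -/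
open Complex ComplexConjugate

noncomputable section

variable {H : Type*} [NormedAddCommGroup H] [InnerProductSpace ℂ H] [CompleteSpace H]

/-- A linear functional on `dom(A*)` is continuous with respect to the graph norm
`‖φ‖₊ = (‖φ‖² + ‖A*φ‖²)^{1/2}` of `H₊`. -/
def GraphNormContinuous (A : H →ₗ.[ℂ] H) (η : A.adjoint.domain →ₗ[ℂ] ℂ) : Prop :=
  ∃ C : ℝ, ∀ φ : A.adjoint.domain,
    ‖η φ‖ ≤ C * Real.sqrt (‖(φ : H)‖ ^ 2 + ‖A.adjoint φ‖ ^ 2)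

/-! Both conditions say that `f(z)` is the conjugate of `⟪w, (ξ z̄, A* ξ z̄)⟫` for a vector
`w = (φ, ψ)` of the Hilbert space `H ⊕ H`: since `A* ξ z̄ = z̄ ξ z̄`, this inner product is
`conj (φ̂(z) + z ψ̂(z))`. A functional continuous for the graph norm is transported to the image of
`dom(A*)` in `H ⊕ H`, extended by Hahn–Banach and represented by the Riesz theorem. -/

section InnerRepresentation

variable {𝕜 M K : Type*} [RCLike 𝕜] [AddCommGroup M] [Module 𝕜 M]
  [NormedAddCommGroup K] [InnerProductSpace 𝕜 K] [CompleteSpace K]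

theorem exists_inner_eq_of_norm_le_mul_norm {L : M →ₗ[𝕜] K} (hL : Function.Injective L)
    (η : M →ₗ[𝕜] 𝕜) {C : ℝ} (hC : ∀ x, ‖η x‖ ≤ C * ‖L x‖) :
    ∃ w : K, ∀ x, η x = inner 𝕜 w (L x) := by
  set e := LinearEquiv.ofInjective L hL
  have hbound : ∀ y, ‖(η ∘ₗ e.symm.toLinearMap) y‖ ≤ max C 0 * ‖y‖ := fun y => by
    have hy : L (e.symm y) = y := congrArg Subtype.val (e.apply_symm_apply y)
    calc ‖η (e.symm y)‖ ≤ C * ‖L (e.symm y)‖ := hC _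
      _ ≤ max C 0 * ‖y‖ := by
        rw [hy]
        exact mul_le_mul_of_nonneg_right (le_max_left _ _) (norm_nonneg _)
  obtain ⟨G, hG, -⟩ :=
    exists_extension_norm_eq _ ((η ∘ₗ e.symm.toLinearMap).mkContinuous _ hbound)
  refine ⟨(InnerProductSpace.toDual 𝕜 K).symm G, fun x => ?_⟩
  rw [InnerProductSpace.toDual_symm_apply, hG ⟨L x, LinearMap.mem_range_self L x⟩]
  simp only [LinearMap.mkContinuous_apply, LinearMap.comp_apply, LinearEquiv.coe_coe]
  exact congrArg η (e.symm_apply_apply x).symm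

end InnerRepresentation

namespace LinearPMap

variable {𝕜 E F : Type*} [RCLike 𝕜] [NormedAddCommGroup E] [InnerProductSpace 𝕜 E]
  [NormedAddCommGroup F] [InnerProductSpace 𝕜 F] (T : E →ₗ.[𝕜] F)

def graphEmbedding : T.domain →ₗ[𝕜] WithLp 2 (E × F) :=
  (WithLp.linearEquiv 2 𝕜 (E × F)).symm.toLinearMap ∘ₗ (T.domain.subtype.prod T.toFun)

theorem graphEmbedding_injective : Function.Injective T.graphEmbedding :=
  fun _ _ h => Subtype.ext (congrArg (fun p : WithLp 2 (E × F) => p.fst) h)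

theorem norm_graphEmbedding (x : T.domain) :
    ‖T.graphEmbedding x‖ = √(‖(x : E)‖ ^ 2 + ‖T x‖ ^ 2) :=
  WithLp.prod_norm_eq_of_L2 _

theorem inner_graphEmbedding (w : WithLp 2 (E × F)) (x : T.domain) :
    inner 𝕜 w (T.graphEmbedding x) = inner 𝕜 w.fst (x : E) + inner 𝕜 w.snd (T x) :=
  WithLp.prod_inner_apply _ _

theorem conj_inner_graphEmbedding_of_apply_eq_smul (S : E →ₗ.[𝕜] E) {x : S.domain} {z : 𝕜}
    (hx : S x = conj z • (x : E)) (w : WithLp 2 (E × E)) :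
    conj (inner 𝕜 w (S.graphEmbedding x)) =
      inner 𝕜 (x : E) w.fst + z * inner 𝕜 (x : E) w.snd := by
  rw [inner_graphEmbedding, hx, inner_smul_right]
  simp only [RingHom.map_add, RingHom.map_mul, inner_conj_symm, RCLike.conj_conj]

end LinearPMap

theorem assoc_hat_space_iff_graph_continuous_functional_general
    (A : H →ₗ.[ℂ] H)
    (ξ : ℂ → H)
    (hdom : ∀ z : ℂ, ξ z ∈ A.adjoint.domain)
    (heig : ∀ z : ℂ, A.adjoint ⟨ξ z, hdom z⟩ = z • ξ z)
    (f : ℂ → ℂ) :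
    (∃ φ ψ : H, ∀ z : ℂ,
        f z = (inner ℂ (ξ (conj z)) φ : ℂ) + z * (inner ℂ (ξ (conj z)) ψ : ℂ)) ↔
    (∃ η : A.adjoint.domain →ₗ[ℂ] ℂ, GraphNormContinuous A η ∧
        ∀ z : ℂ, f z = conj (η ⟨ξ (conj z), hdom (conj z)⟩)) := by
  have hconj (z : ℂ) (w : WithLp 2 (H × H)) :
      conj (inner ℂ w (A.adjoint.graphEmbedding ⟨ξ (conj z), hdom (conj z)⟩)) =
        inner ℂ (ξ (conj z)) w.fst + z * inner ℂ (ξ (conj z)) w.snd :=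
    A.adjoint.conj_inner_graphEmbedding_of_apply_eq_smul (heig (conj z)) w
  constructor
  · rintro ⟨φ, ψ, hf⟩
    set w : WithLp 2 (H × H) := WithLp.toLp 2 (φ, ψ)
    refine ⟨(innerSL ℂ w).toLinearMap ∘ₗ A.adjoint.graphEmbedding, ⟨‖w‖, fun x => ?_⟩,
      fun z => (hf z).trans (hconj z w).symm⟩
    rw [← A.adjoint.norm_graphEmbedding]
    exact norm_inner_le_norm (𝕜 := ℂ) w _
  · rintro ⟨η, ⟨C, hC⟩, hη⟩
    simp_rw [← A.adjoint.norm_graphEmbedding] at hC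
    obtain ⟨w, hw⟩ := exists_inner_eq_of_norm_le_mul_norm A.adjoint.graphEmbedding_injective η hC
    exact ⟨w.fst, w.snd, fun z => by rw [hη z, hw, hconj z w]⟩

/-- Proposition 5.1: an entire function `f` belongs to `assoc Ĥ = Ĥ + z Ĥ`
(i.e. `f(z) = φ̂(z) + z·ψ̂(z)` for some `φ, ψ ∈ H`) if and only if
`f(z) = conj (η(ξ(z̄)))` for some graph-norm continuous linear functional `η` on
`dom(A*)`. -/
theorem assoc_hat_space_iff_graph_continuous_functional
    [TopologicalSpace.SeparableSpace H]
    (A : H →ₗ.[ℂ] H) (hA : IsSymClass A)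
    (ξ : ℂ → H) (hξdiff : Differentiable ℂ ξ)
    (hdom : ∀ z : ℂ, ξ z ∈ A.adjoint.domain)
    (heig : ∀ z : ℂ, A.adjoint ⟨ξ z, hdom z⟩ = z • ξ z)
    (hξne : ∀ z : ℂ, ξ z ≠ 0)
    (f : ℂ → ℂ) (hf : Differentiable ℂ f) :
    (∃ φ ψ : H, ∀ z : ℂ,
        f z = (inner ℂ (ξ (conj z)) φ : ℂ) + z * (inner ℂ (ξ (conj z)) ψ : ℂ)) ↔
    (∃ η : A.adjoint.domain →ₗ[ℂ] ℂ, GraphNormContinuous A η ∧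
        ∀ z : ℂ, f z = conj (η ⟨ξ (conj z), hdom (conj z)⟩)) :=
  assoc_hat_space_iff_graph_continuous_functional_general A ξ hdom heig f

end
end
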